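/- For positive reals x ≠ y, the continuous extension of the Stolarsky mean to parameters (0,-1) equals the Scharfetter–Gummel mean: S_{0,-1}(x,y) = xy·(log x - log y)/(x - y). -/

import Mathlib

open Filter

/-- The weighted Stolarsky mean. -/
noncomputable def stolarsky (α β x y : ℝ) : ℝ :=
  ((β * (x ^ α - y ^ α)) / (α * (x ^ β - y ^ β))) ^ (1 / (α - β))

/-! The limit as `α → 0` is taken inside the power: the base `β (x^α - y^α) / (α (x^β - y^β))`
tends to `β (log x - log y) / (x^β - y^β)` because `(x^α - y^α)/α` is a difference quotient of
`α ↦ x^α - y^α` at `0`, and the exponent `1/(α - β)` tends to `-1/β`. For `β = -1` the exponent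
is `1` and `x⁻¹ - y⁻¹ = (y - x)/(xy)`. -/

open Real Topology

lemma hasDerivAt_rpow_sub_rpow_zero {x y : ℝ} (hx : 0 < x) (hy : 0 < y) :
    HasDerivAt (fun α : ℝ => x ^ α - y ^ α) (log x - log y) 0 := by
  have h := (hasStrictDerivAt_const_rpow hx 0).hasDerivAt.sub
    (hasStrictDerivAt_const_rpow hy 0).hasDerivAt
  rwa [rpow_zero, rpow_zero, one_mul, one_mul] at h

lemma tendsto_rpow_sub_rpow_div_self {x y : ℝ} (hx : 0 < x) (hy : 0 < y) :
    Tendsto (fun α : ℝ => (x ^ α - y ^ α) / α) (𝓝[≠] 0) (𝓝 (log x - log y)) := by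
  refine (hasDerivAt_iff_tendsto_slope_zero.mp (hasDerivAt_rpow_sub_rpow_zero hx hy)).congr
    fun α => ?_
  simp [div_eq_inv_mul]

lemma rpow_ne_rpow_of_ne {x y β : ℝ} (hx : 0 ≤ x) (hy : 0 ≤ y) (hxy : x ≠ y) (hβ : β ≠ 0) :
    x ^ β ≠ y ^ β :=
  fun h => hxy (rpow_left_injOn hβ hx hy h)

lemma log_sub_log_ne_zero {x y : ℝ} (hx : 0 < x) (hy : 0 < y) (hxy : x ≠ y) :
    log x - log y ≠ 0 :=
  sub_ne_zero.mpr fun h => hxy (log_injOn_pos hx hy h)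

theorem tendsto_stolarsky_zero {β x y : ℝ} (hx : 0 < x) (hy : 0 < y) (hxy : x ≠ y)
    (hβ : β ≠ 0) :
    Tendsto (fun α => stolarsky α β x y) (𝓝[≠] 0)
      (𝓝 ((β * (log x - log y) / (x ^ β - y ^ β)) ^ (-β)⁻¹)) := by
  have hpow : x ^ β - y ^ β ≠ 0 := sub_ne_zero.mpr (rpow_ne_rpow_of_ne hx.le hy.le hxy hβ)
  have hbase : Tendsto (fun α : ℝ => β * (x ^ α - y ^ α) / (α * (x ^ β - y ^ β))) (𝓝[≠] 0)
      (𝓝 (β * (log x - log y) / (x ^ β - y ^ β))) := by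
    refine (((tendsto_rpow_sub_rpow_div_self hx hy).const_mul β).div_const
      (x ^ β - y ^ β)).congr fun α => ?_
    rw [← mul_div_assoc, div_div]
  have hexp : Tendsto (fun α : ℝ => 1 / (α - β)) (𝓝[≠] 0) (𝓝 (-β)⁻¹) := by
    have : ContinuousAt (fun α : ℝ => 1 / (α - β)) 0 :=
      continuousAt_const.div (by fun_prop) (by simpa using hβ)
    simpa using this.tendsto.mono_left nhdsWithin_le_nhds
  exact hbase.rpow hexp
    (Or.inl (div_ne_zero (mul_ne_zero hβ (log_sub_log_ne_zero hx hy hxy)) hpow))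

/-- The continuous extension `S_{0,-1}`, i.e. the limit of `S_{α,-1}` as `α → 0`,
equals the Scharfetter--Gummel mean `xy (log x - log y)/(x - y)`. -/
theorem stolarsky_zero_neg_one_eq_SGMean (x y : ℝ) (hx : 0 < x) (hy : 0 < y) (hxy : x ≠ y) :
    Tendsto (fun α => stolarsky α (-1) x y) (nhdsWithin 0 {(0 : ℝ)}ᶜ)
      (nhds (x * y * (Real.log x - Real.log y) / (x - y))) := by
  convert tendsto_stolarsky_zero hx hy hxy (β := -1) (by norm_num) using 2
  rw [neg_neg, inv_one, rpow_one, rpow_neg_one, rpow_neg_one]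
  field_simp
  ring
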